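/- arXiv:2007.06301 — 6 statements merged into one kernel-verified Lean document; each statement's English description precedes it below -/
import Mathlib

section
/- Let H : [0,∞) → [0,1] be measurable and integrable with ‖H‖₁ = ∫_0^∞ H(x) dx. There exists a finite constant C > 0, depending only on H, such that for every L > 0, (1/L) ∫_0^L ( exp( ∫_0^L H(ρ_L(0,z)) H(ρ_L(x,z)) dz ) − 1 ) dx ≤ (4C/L) ‖H‖₁². -/
/-!
Write `A = ∫₀^∞ H`. Splitting at `z` and substituting `u = |x - z|` turns
`∫₀^L H(ρ_L(x, z)) dx` into two integrals of `u ↦ H(min u (L - u)) ≤ H u + H (L - u)`, so it is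
at most `4A`. Hence the exponent `I x = ∫₀^L H(ρ_L(0, z)) H(ρ_L(x, z)) dz` lies in `[0, 4A]`, so
that `exp (I x) - 1 ≤ I x · exp (I x) ≤ e^{4A} I x`, and by Fubini `∫₀^L I ≤ 4A · 4A`.
This gives the bound with `C = 4 e^{4A}`.
-/

open MeasureTheory Real

/-- Toroidal (circular) distance on `[0, L]`. -/
noncomputable def torDist (L x y : ℝ) : ℝ := min |x - y| (L - |x - y|)

lemma Real.exp_sub_one_le_mul_exp (t : ℝ) : exp t - 1 ≤ t * exp t := by
  have h := mul_le_mul_of_nonneg_left (one_sub_le_exp_neg t) (exp_pos t).le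
  rw [← exp_add, add_neg_cancel, exp_zero] at h
  linarith

lemma Measurable.intervalIntegrable_of_norm_le {f : ℝ → ℝ} (hf : Measurable f) {C : ℝ}
    (hC : ∀ x, ‖f x‖ ≤ C) (a b : ℝ) : IntervalIntegrable f volume a b :=
  (intervalIntegrable_const (c := C)).mono_fun hf.aestronglyMeasurable
    (ae_of_all _ fun x => (hC x).trans (le_abs_self C))

lemma measurable_intervalIntegral_of_uncurry {F : ℝ → ℝ → ℝ}
    (hF : Measurable (Function.uncurry F)) (a b : ℝ) :
    Measurable fun x => ∫ z in a..b, F x z := by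
  simp only [intervalIntegral]
  exact hF.stronglyMeasurable.integral_prod_right.measurable.sub
    hF.stronglyMeasurable.integral_prod_right.measurable

lemma intervalIntegral_exp_sub_one_le {I : ℝ → ℝ} {L M : ℝ} (hL : 0 ≤ L) (hI : Measurable I)
    (hI0 : ∀ x, 0 ≤ I x) (hIM : ∀ x, I x ≤ M) :
    ∫ x in 0..L, (exp (I x) - 1) ≤ exp M * ∫ x in 0..L, I x := by
  have hI_int : IntervalIntegrable I volume 0 L :=
    hI.intervalIntegrable_of_norm_le (fun x => (norm_of_nonneg (hI0 x)).trans_le (hIM x)) 0 L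
  have hexpI_int : IntervalIntegrable (fun x => exp (I x) - 1) volume 0 L :=
    Measurable.intervalIntegrable_of_norm_le (C := exp M) (by fun_prop) (fun x => by
      rw [norm_of_nonneg (sub_nonneg.2 (one_le_exp (hI0 x)))]
      linarith [exp_le_exp.2 (hIM x)]) 0 L
  rw [← intervalIntegral.integral_const_mul]
  refine intervalIntegral.integral_mono_on hL hexpI_int (hI_int.const_mul _) fun x _ => ?_
  calc exp (I x) - 1 ≤ I x * exp (I x) := exp_sub_one_le_mul_exp _
    _ ≤ exp M * I x := by rw [mul_comm]; gcongr; exacts [hI0 x, hIM x]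

lemma intervalIntegral_mul_le_of_norm_le_one {f g : ℝ → ℝ} {a b : ℝ} (hab : a ≤ b)
    (hf : Measurable f) (hg : Measurable g) (hf0 : ∀ z, 0 ≤ f z) (hf1 : ∀ z, f z ≤ 1)
    (hg1 : ∀ z, ‖g z‖ ≤ 1) :
    ∫ z in a..b, f z * g z ≤ ∫ z in a..b, f z := by
  have hf_norm : ∀ z, ‖f z‖ ≤ 1 := fun z => (norm_of_nonneg (hf0 z)).trans_le (hf1 z)
  refine intervalIntegral.integral_mono_on hab
    ((hf.mul hg).intervalIntegrable_of_norm_le (fun z =>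
      (norm_mul _ _).trans_le (mul_le_one₀ (hf_norm z) (norm_nonneg _) (hg1 z))) a b)
    (hf.intervalIntegrable_of_norm_le hf_norm a b) fun z _ => ?_
  exact mul_le_of_le_one_right (hf0 z) ((le_abs_self _).trans (hg1 z))

lemma integral_integral_mul_le {f : ℝ → ℝ} {K : ℝ → ℝ → ℝ} {L B : ℝ} (hL : 0 ≤ L)
    (hf : Measurable f) (hK : Measurable (Function.uncurry K))
    (hf0 : ∀ z, 0 ≤ f z) (hf1 : ∀ z, f z ≤ 1) (hK1 : ∀ x z, ‖K x z‖ ≤ 1)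
    (hKB : ∀ z ∈ Set.Ioc 0 L, ∫ x in 0..L, K x z ≤ B) :
    ∫ x in 0..L, ∫ z in 0..L, f z * K x z ≤ B * ∫ z in 0..L, f z := by
  simp only [intervalIntegral.integral_of_le hL] at hKB ⊢
  have hfK : Integrable (Function.uncurry fun x z => f z * K x z)
      ((volume.restrict (Set.Ioc 0 L)).prod (volume.restrict (Set.Ioc 0 L))) :=
    .of_bound ((hf.comp measurable_snd).mul hK).aestronglyMeasurable 1 (ae_of_all _ fun p => by
      rw [Function.uncurry_def, norm_mul, norm_of_nonneg (hf0 _)]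
      exact mul_le_one₀ (hf1 p.2) (norm_nonneg _) (hK1 p.1 p.2))
  have hfB : IntegrableOn (fun z => B * f z) (Set.Ioc 0 L) :=
    .of_bound measure_Ioc_lt_top (hf.const_mul B).aestronglyMeasurable |B|
      (ae_of_all _ fun z => by
        simpa [abs_mul, abs_of_nonneg (hf0 _)] using
          mul_le_of_le_one_right (abs_nonneg B) (hf1 z))
  rw [integral_integral_swap hfK, ← integral_const_mul]
  refine setIntegral_mono_on hfK.integral_prod_right hfB measurableSet_Ioc fun z hz => ?_
  rw [integral_const_mul, mul_comm B]
  exact mul_le_mul_of_nonneg_left (hKB z hz) (hf0 z)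

lemma continuous_torDist (L : ℝ) : Continuous fun p : ℝ × ℝ => torDist L p.1 p.2 := by
  unfold torDist
  fun_prop

lemma torDist_comm (L x y : ℝ) : torDist L x y = torDist L y x := by
  simp only [torDist, abs_sub_comm]

section

variable {H : ℝ → ℝ}

lemma intervalIntegral_le_integral_Ioi (h0 : ∀ x, 0 ≤ H x) (hint : IntegrableOn H (Set.Ioi 0))
    {a b : ℝ} (ha : 0 ≤ a) (hab : a ≤ b) : ∫ x in a..b, H x ≤ ∫ x in Set.Ioi 0, H x := by
  rw [intervalIntegral.integral_of_le hab]
  exact setIntegral_mono_set hint (ae_of_all _ fun x => h0 x)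
    (Set.Ioc_subset_Ioi_self.trans (Set.Ioi_subset_Ioi ha)).eventuallyLE

lemma intervalIntegrable_of_integrableOn_Ioi (hint : IntegrableOn H (Set.Ioi 0))
    {a b : ℝ} (ha : 0 ≤ a) (hb : 0 ≤ b) : IntervalIntegrable H volume a b :=
  ⟨hint.mono_set (Set.Ioc_subset_Ioi_self.trans (Set.Ioi_subset_Ioi ha)),
    hint.mono_set (Set.Ioc_subset_Ioi_self.trans (Set.Ioi_subset_Ioi hb))⟩

lemma integral_comp_min_sub_le (hmeas : Measurable H) (h0 : ∀ x, 0 ≤ H x)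
    (hint : IntegrableOn H (Set.Ioi 0)) {L w : ℝ} (hw0 : 0 ≤ w) (hwL : w ≤ L) :
    ∫ u in 0..w, H (min u (L - u)) ≤ 2 * ∫ x in Set.Ioi 0, H x := by
  have hH : IntervalIntegrable H volume 0 w :=
    intervalIntegrable_of_integrableOn_Ioi hint le_rfl hw0
  have hHrev : IntervalIntegrable (fun u => H (L - u)) volume 0 w := by
    simpa using (intervalIntegrable_of_integrableOn_Ioi hint (a := L) (b := L - w)
      (by linarith) (by linarith)).comp_sub_left L
  have hmin_le : ∀ u, H (min u (L - u)) ≤ H u + H (L - u) := fun u => by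
    rcases min_choice u (L - u) with h | h <;> rw [h] <;> linarith [h0 u, h0 (L - u)]
  have hmin : IntervalIntegrable (fun u => H (min u (L - u))) volume 0 w :=
    (hH.add hHrev).mono_fun
      (hmeas.comp (by fun_prop : Measurable fun u : ℝ => min u (L - u))).aestronglyMeasurable
      (ae_of_all _ fun u => by
        simp only [norm_eq_abs, abs_of_nonneg (h0 _), abs_of_nonneg (add_nonneg (h0 _) (h0 _))]
        exact hmin_le u)
  calc ∫ u in 0..w, H (min u (L - u)) ≤ ∫ u in 0..w, (H u + H (L - u)) :=
        intervalIntegral.integral_mono_on hw0 hmin (hH.add hHrev) fun u _ => hmin_le u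
    _ = (∫ u in 0..w, H u) + ∫ u in (L - w)..L, H u := by
        rw [intervalIntegral.integral_add hH hHrev, intervalIntegral.integral_comp_sub_left H L,
          sub_zero]
    _ ≤ 2 * ∫ x in Set.Ioi 0, H x := by
        linarith [intervalIntegral_le_integral_Ioi h0 hint le_rfl hw0,
          intervalIntegral_le_integral_Ioi h0 hint (a := L - w) (b := L) (by linarith)
            (by linarith)]

lemma integral_comp_torDist_le (hmeas : Measurable H) (h0 : ∀ x, 0 ≤ H x) (h1 : ∀ x, H x ≤ 1)
    (hint : IntegrableOn H (Set.Ioi 0)) {L z : ℝ} (hz0 : 0 ≤ z) (hzL : z ≤ L) :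
    ∫ x in 0..L, H (torDist L x z) ≤ 4 * ∫ x in Set.Ioi 0, H x := by
  set g : ℝ → ℝ := fun u => H (min u (L - u))
  have hH : ∀ a b, IntervalIntegrable (fun x => H (torDist L x z)) volume a b :=
    (hmeas.comp (by unfold torDist; fun_prop)).intervalIntegrable_of_norm_le
      fun x => (norm_of_nonneg (h0 _)).trans_le (h1 _)
  have hleft : ∫ x in 0..z, H (torDist L x z) = ∫ u in 0..z, g u := calc
    _ = ∫ x in 0..z, g (z - x) := intervalIntegral.integral_congr fun x hx => by
          rw [Set.uIcc_of_le hz0] at hx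
          simp only [g, torDist, abs_of_nonpos (sub_nonpos.2 hx.2), neg_sub]
    _ = ∫ u in 0..z, g u := by simp [intervalIntegral.integral_comp_sub_left]
  have hright : ∫ x in z..L, H (torDist L x z) = ∫ u in 0..(L - z), g u := calc
    _ = ∫ x in z..L, g (x - z) := intervalIntegral.integral_congr fun x hx => by
          rw [Set.uIcc_of_le hzL] at hx
          simp only [g, torDist, abs_of_nonneg (sub_nonneg.2 hx.1)]
    _ = ∫ u in 0..(L - z), g u := by simp [intervalIntegral.integral_comp_sub_right]
  rw [← intervalIntegral.integral_add_adjacent_intervals (hH 0 z) (hH z L), hleft, hright]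
  linarith [integral_comp_min_sub_le hmeas h0 hint hz0 hzL,
    integral_comp_min_sub_le hmeas h0 hint (sub_nonneg.2 hzL) (sub_le_self L hz0)]

end

/-- There is a finite constant `C > 0`, depending only on `H`, such that for every `L > 0`,
`(1/L) ∫_0^L ( exp( ∫_0^L H(ρ_L(0,z)) H(ρ_L(x,z)) dz ) − 1 ) dx ≤ (4C/L) ‖H‖₁²`. -/
theorem stmt_2 (H : ℝ → ℝ)
    (hmeas : Measurable H) (h0 : ∀ x, 0 ≤ H x) (h1 : ∀ x, H x ≤ 1)
    (hint : IntegrableOn H (Set.Ioi 0)) :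
    ∃ C > (0:ℝ), ∀ L > (0:ℝ),
      (1 / L) * ∫ x in (0:ℝ)..L,
          (Real.exp (∫ z in (0:ℝ)..L, H (torDist L 0 z) * H (torDist L x z)) - 1)
        ≤ (4 * C / L) * (∫ x in Set.Ioi (0:ℝ), H x) ^ 2 := by
  set A := ∫ x in Set.Ioi (0:ℝ), H x
  have hA : 0 ≤ A := setIntegral_nonneg measurableSet_Ioi fun x _ => h0 x
  refine ⟨4 * exp (4 * A), by positivity, fun L hL => ?_⟩
  have hHρ : Measurable (Function.uncurry fun x z => H (torDist L x z)) :=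
    hmeas.comp (continuous_torDist L).measurable
  have hHρx : ∀ x, Measurable fun z => H (torDist L x z) := fun x =>
    hHρ.comp (measurable_const.prodMk measurable_id)
  have hHρ_norm : ∀ x z, ‖H (torDist L x z)‖ ≤ 1 := fun x z =>
    (norm_of_nonneg (h0 _)).trans_le (h1 _)
  have hH0 : ∫ z in 0..L, H (torDist L 0 z) ≤ 4 * A := by
    simpa only [torDist_comm L 0] using integral_comp_torDist_le hmeas h0 h1 hint le_rfl hL.le
  set I : ℝ → ℝ := fun x => ∫ z in 0..L, H (torDist L 0 z) * H (torDist L x z)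
  have hI_meas : Measurable I :=
    measurable_intervalIntegral_of_uncurry (F := fun x z => H (torDist L 0 z) * H (torDist L x z))
      (((hHρx 0).comp measurable_snd).mul hHρ) 0 L
  have hI_nonneg : ∀ x, 0 ≤ I x := fun x =>
    intervalIntegral.integral_nonneg hL.le fun z _ => mul_nonneg (h0 _) (h0 _)
  have hI_le : ∀ x, I x ≤ 4 * A := fun x =>
    (intervalIntegral_mul_le_of_norm_le_one hL.le (hHρx 0) (hHρx x) (fun _ => h0 _)
      (fun _ => h1 _) (hHρ_norm x)).trans hH0
  have hI_int_le : ∫ x in 0..L, I x ≤ 4 * A * (4 * A) :=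
    (integral_integral_mul_le hL.le (hHρx 0) hHρ (fun _ => h0 _) (fun _ => h1 _) hHρ_norm
      fun z hz => integral_comp_torDist_le hmeas h0 h1 hint hz.1.le hz.2).trans (by gcongr)
  calc (1 / L) * ∫ x in 0..L, (exp (I x) - 1)
      ≤ (1 / L) * (exp (4 * A) * (4 * A * (4 * A))) := by
        gcongr
        exact (intervalIntegral_exp_sub_one_le hL.le hI_meas hI_nonneg hI_le).trans
          (by gcongr)
    _ = 4 * (4 * exp (4 * A)) / L * A ^ 2 := by ring
end

section
/- Let H : [0,∞) → [0,1] be measurable and integrable with ‖H‖₁ = ∫_0^∞ H(x) dx > 0, let γ > 0, and for L > 1 set R_L = γ ln L. Define E(L) = L · exp( −2 R_L ∫_0^{L/(2R_L)} H(u) du ) (the mean number of isolated nodes in the soft RGG with scaled connection function H(·/R_L)). Then, as L → ∞: E(L) → 0 if 2γ‖H‖₁ > 1, and E(L) → ∞ if 2γ‖H‖₁ < 1. -/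
open MeasureTheory Real Filter

/-! Writing `L = exp (log L)`, the mean is `E(L) = exp (log L * (1 - 2γ I(L)))` with
`I(L) = ∫_0^{L/(2γ log L)} H`. Since `L / log L → ∞`, integrability of `H` gives
`I(L) → ‖H‖₁`, so the exponent is `log L` times a factor tending to `1 - 2γ‖H‖₁`;
its sign decides whether `E(L)` tends to `0` or to `∞`. -/

theorem tendsto_div_log_atTop : Tendsto (fun x : ℝ => x / log x) atTop atTop := by
  have h : Tendsto (fun x : ℝ => log x / x) atTop (nhdsWithin 0 (Set.Ioi 0)) := by
    refine tendsto_nhdsWithin_iff.mpr ⟨isLittleO_log_id_atTop.tendsto_div_nhds_zero, ?_⟩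
    filter_upwards [eventually_gt_atTop (1 : ℝ)] with x hx
    exact div_pos (log_pos hx) (one_pos.trans hx)
  simpa only [Pi.inv_def, inv_div] using h.inv_tendsto_nhdsGT_zero

theorem tendsto_div_const_mul_log_atTop {a : ℝ} (ha : 0 < a) :
    Tendsto (fun x : ℝ => x / (a * log x)) atTop atTop :=
  (tendsto_div_log_atTop.atTop_div_const ha).congr fun x => by rw [div_div, mul_comm]

theorem mul_exp_neg_mul_log {x : ℝ} (hx : 0 < x) (a : ℝ) :
    x * exp (-(log x * a)) = exp (log x * (1 - a)) := by
  nth_rewrite 1 [← exp_log hx]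
  rw [← exp_add]
  ring_nf

theorem tendsto_exp_log_mul_nhds_zero {g : ℝ → ℝ} {a : ℝ} (hg : Tendsto g atTop (nhds a))
    (ha : a < 0) : Tendsto (fun x => exp (log x * g x)) atTop (nhds 0) :=
  tendsto_exp_atBot.comp (tendsto_log_atTop.atTop_mul_neg ha hg)

theorem tendsto_exp_log_mul_atTop {g : ℝ → ℝ} {a : ℝ} (hg : Tendsto g atTop (nhds a))
    (ha : 0 < a) : Tendsto (fun x => exp (log x * g x)) atTop atTop :=
  tendsto_exp_atTop.comp (tendsto_log_atTop.atTop_mul_pos ha hg)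

theorem stmt_7_general (H : ℝ → ℝ)
    (hint : IntegrableOn H (Set.Ioi 0))
    (γ : ℝ) (hγ : 0 < γ)
    (E : ℝ → ℝ)
    (hE : ∀ L : ℝ, 1 < L →
      E L = L * Real.exp (-(2 * (γ * Real.log L) *
        ∫ u in (0:ℝ)..(L / (2 * (γ * Real.log L))), H u))) :
    (2 * γ * (∫ x in Set.Ioi (0:ℝ), H x) > 1 → Tendsto E atTop (nhds 0))
    ∧ (2 * γ * (∫ x in Set.Ioi (0:ℝ), H x) < 1 → Tendsto E atTop atTop) := by
  set c := ∫ x in Set.Ioi (0:ℝ), H x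
  set g := fun L : ℝ => 1 - 2 * γ * ∫ u in (0:ℝ)..(L / (2 * γ * Real.log L)), H u
  have hg : Tendsto g atTop (nhds (1 - 2 * γ * c)) :=
    tendsto_const_nhds.sub (tendsto_const_nhds.mul
      (intervalIntegral_tendsto_integral_Ioi 0 hint
        (tendsto_div_const_mul_log_atTop (by positivity))))
  have hEg : (fun L => exp (log L * g L)) =ᶠ[atTop] E := by
    filter_upwards [eventually_gt_atTop (1 : ℝ)] with L hL
    rw [hE L hL, ← mul_exp_neg_mul_log (one_pos.trans hL)]
    ring_nf
  exact ⟨fun h => (tendsto_exp_log_mul_nhds_zero hg (by linarith)).congr' hEg,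
    fun h => (tendsto_exp_log_mul_atTop hg (by linarith)).congr' hEg⟩

/-- Sharp threshold for the mean number of isolated nodes:
with `R_L = γ ln L` and `E(L) = L exp(−2 R_L ∫_0^{L/(2R_L)} H(u) du)`,
`E(L) → 0` if `2γ‖H‖₁ > 1` and `E(L) → ∞` if `2γ‖H‖₁ < 1`. -/
theorem stmt_7 (H : ℝ → ℝ)
    (hmeas : Measurable H) (h0 : ∀ x, 0 ≤ H x) (h1 : ∀ x, H x ≤ 1)
    (hint : IntegrableOn H (Set.Ioi 0)) (hpos : 0 < ∫ x in Set.Ioi (0:ℝ), H x)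
    (γ : ℝ) (hγ : 0 < γ)
    (E : ℝ → ℝ)
    (hE : ∀ L : ℝ, 1 < L →
      E L = L * Real.exp (-(2 * (γ * Real.log L) *
        ∫ u in (0:ℝ)..(L / (2 * (γ * Real.log L))), H u))) :
    (2 * γ * (∫ x in Set.Ioi (0:ℝ), H x) > 1 → Tendsto E atTop (nhds 0))
    ∧ (2 * γ * (∫ x in Set.Ioi (0:ℝ), H x) < 1 → Tendsto E atTop atTop) :=
  stmt_7_general H hint γ hγ E hE
end

section
/- Let H : [0,∞) → [0,1] be monotone decreasing with unbounded support, i.e. ∫_r^∞ H(x) dx > 0 for every r ≥ 0, and let α > 0. Then ∫_0^∞ ( 1 − (1 − H(z + α))^{1+n} ) dz → ∞ as n → ∞. In particular, if R_L = γ ln L and n_L = ⌊δ R_L⌋ for fixed γ, δ > 0, then R_L ∫_0^∞ ( 1 − (1 − H(z + α))^{1+n_L} ) dz grows faster than any constant multiple of ln L as L → ∞. -/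
open MeasureTheory Real Filter Set

/-!
An antitone `H` whose tail integrals never vanish is strictly positive on `[0, ∞)`, so for
each `M > 0` the base `1 - H (z + α)` is bounded on `(0, M]` by `q = 1 - H (M + α) < 1`.
Hence the `n`-th integral is at least `M (1 - q ^ n) → M`, and the integrals tend to `∞`.
The growth statement follows because `⌊δ γ ln L⌋₊ → ∞`.
-/

lemma pos_of_antitoneOn_of_setLIntegral_Ioi_pos {μ : Measure ℝ} {f : ℝ → ℝ} {a x : ℝ}
    (hf : AntitoneOn f (Ici a)) (hx : a ≤ x)
    (hint : 0 < ∫⁻ y in Ioi x, ENNReal.ofReal (f y) ∂μ) : 0 < f x := by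
  by_contra! hfx
  have htail : ∀ y ∈ Ioi x, ENNReal.ofReal (f y) = 0 := fun y hy =>
    ENNReal.ofReal_eq_zero.mpr <| (hf hx (hx.trans (le_of_lt hy)) (le_of_lt hy)).trans hfx
  rw [setLIntegral_congr_fun measurableSet_Ioi htail, lintegral_zero] at hint
  exact hint.false

lemma ofReal_mul_one_sub_pow_le_setLIntegral_Ioi {g : ℝ → ℝ} {a M : ℝ} (hM : 0 ≤ M)
    (hg0 : ∀ z ∈ Ioi a, 0 ≤ g z) (hg : MonotoneOn g (Ioi a)) (n : ℕ) :
    ENNReal.ofReal (M * (1 - g (a + M) ^ n))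
      ≤ ∫⁻ z in Ioi a, ENNReal.ofReal (1 - g z ^ n) := by
  rcases hM.eq_or_lt with rfl | hM
  · simp
  have hb : a + M ∈ Ioi a := by simpa using hM
  have hpow : ∀ z ∈ Ioc a (a + M), g z ^ n ≤ g (a + M) ^ n := fun z hz =>
    pow_le_pow_left₀ (hg0 z hz.1) (hg hz.1 hb hz.2) n
  calc ENNReal.ofReal (M * (1 - g (a + M) ^ n))
      = ∫⁻ _ in Ioc a (a + M), ENNReal.ofReal (1 - g (a + M) ^ n) := by
        rw [setLIntegral_const, Real.volume_Ioc, add_sub_cancel_left, mul_comm,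
          ENNReal.ofReal_mul' hM.le]
    _ ≤ ∫⁻ z in Ioc a (a + M), ENNReal.ofReal (1 - g z ^ n) :=
        setLIntegral_mono' measurableSet_Ioc fun z hz =>
          ENNReal.ofReal_le_ofReal (by linarith [hpow z hz])
    _ ≤ ∫⁻ z in Ioi a, ENNReal.ofReal (1 - g z ^ n) :=
        lintegral_mono_set Ioc_subset_Ioi_self

lemma tendsto_setLIntegral_Ioi_one_sub_pow_atTop {g : ℝ → ℝ} {a : ℝ}
    (hg0 : ∀ z ∈ Ioi a, 0 ≤ g z) (hg1 : ∀ z ∈ Ioi a, g z < 1) (hg : MonotoneOn g (Ioi a)) :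
    Tendsto (fun n : ℕ => ∫⁻ z in Ioi a, ENNReal.ofReal (1 - g z ^ n)) atTop (nhds ⊤) := by
  rw [ENNReal.tendsto_nhds_top_iff_nnreal]
  intro x
  set M : ℝ := x + 1
  have hb : a + M ∈ Ioi a := by simp [M]; positivity
  have hq : Tendsto (fun n : ℕ => M * (1 - g (a + M) ^ n)) atTop (nhds (M * (1 - 0))) :=
    ((tendsto_pow_atTop_nhds_zero_of_lt_one (hg0 _ hb) (hg1 _ hb)).const_sub 1).const_mul M
  have hxM : (x : ℝ) < M * (1 - 0) := by simp [M]
  filter_upwards [hq.eventually (lt_mem_nhds hxM)] with n hn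
  calc (x : ENNReal) = ENNReal.ofReal x := (ENNReal.ofReal_coe_nnreal).symm
    _ < ENNReal.ofReal (M * (1 - g (a + M) ^ n)) :=
        (ENNReal.ofReal_lt_ofReal_iff_of_nonneg x.2).mpr hn
    _ ≤ _ := ofReal_mul_one_sub_pow_le_setLIntegral_Ioi (by positivity) hg0 hg n

lemma eventually_ofReal_mul_le_ofReal_mul_floor {F : ℕ → ENNReal}
    (hF : Tendsto F atTop (nhds ⊤)) {δ : ℝ} (hδ : 0 < δ) (c : ℝ) :
    ∀ᶠ u : ℝ in atTop, ENNReal.ofReal (c * u) ≤ ENNReal.ofReal u * F ⌊δ * u⌋₊ := by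
  obtain ⟨N, hN⟩ := eventually_atTop.mp <|
    hF.eventually (eventually_ge_nhds (ENNReal.ofReal_lt_top (r := c)))
  filter_upwards [(tendsto_id.const_mul_atTop hδ).eventually_ge_atTop (N : ℝ),
    eventually_ge_atTop 0] with u hu hu0
  rw [mul_comm, ENNReal.ofReal_mul hu0]
  exact mul_le_mul_right (hN _ (Nat.le_floor hu)) _

theorem stmt_8_general (H : ℝ → ℝ)
    (h1 : ∀ x, H x ≤ 1)
    (hant : AntitoneOn H (Set.Ici 0))
    (hsupp : ∀ r : ℝ, 0 ≤ r → 0 < ∫⁻ x in Set.Ioi r, ENNReal.ofReal (H x))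
    (α : ℝ) (hα : 0 < α) :
    Tendsto
      (fun n : ℕ => ∫⁻ z in Set.Ioi (0:ℝ),
        ENNReal.ofReal (1 - (1 - H (z + α)) ^ (1 + n)))
      atTop (nhds ⊤)
    ∧ ∀ γ δ : ℝ, 0 < γ → 0 < δ → ∀ c : ℝ, 0 < c →
        ∀ᶠ L : ℝ in atTop,
          ENNReal.ofReal (c * Real.log L)
            ≤ ENNReal.ofReal (γ * Real.log L) *
                ∫⁻ z in Set.Ioi (0:ℝ),
                  ENNReal.ofReal
                    (1 - (1 - H (z + α)) ^ (1 + Nat.floor (δ * (γ * Real.log L)))) := by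
  have hpos : ∀ z ∈ Ioi (0 : ℝ), 0 < H (z + α) := fun z hz =>
    pos_of_antitoneOn_of_setLIntegral_Ioi_pos hant (by linarith [mem_Ioi.mp hz])
      (hsupp _ (by linarith [mem_Ioi.mp hz]))
  have hmono : MonotoneOn (fun z => 1 - H (z + α)) (Ioi 0) := fun z hz w hw hzw =>
    sub_le_sub_left (hant (show 0 ≤ z + α by linarith [mem_Ioi.mp hz])
      (show 0 ≤ w + α by linarith [mem_Ioi.mp hw]) (by linarith)) 1
  have hlim := (tendsto_setLIntegral_Ioi_one_sub_pow_atTop (fun z _ => sub_nonneg.mpr (h1 _))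
    (fun z hz => sub_lt_self 1 (hpos z hz)) hmono).comp
    (tendsto_atTop_mono (fun n => Nat.le_add_left n 1) tendsto_id)
  refine ⟨hlim, fun γ δ hγ hδ c _ => ?_⟩
  have hlog : Tendsto (fun L => γ * Real.log L) atTop atTop :=
    Real.tendsto_log_atTop.const_mul_atTop hγ
  filter_upwards [hlog.eventually (eventually_ofReal_mul_le_ofReal_mul_floor hlim hδ (c / γ))]
    with L hL
  rwa [← mul_assoc, div_mul_cancel₀ c hγ.ne'] at hL

/-- If `H : [0,∞) → [0,1]` is monotone decreasing with unbounded support, then for any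
`α > 0`, `∫_0^∞ (1 − (1 − H(z+α))^{1+n}) dz → ∞` as `n → ∞`; in particular, with
`R_L = γ ln L` and `n_L = ⌊δ R_L⌋`, `R_L ∫_0^∞ (1 − (1 − H(z+α))^{1+n_L}) dz` grows
faster than any constant multiple of `ln L`. -/
theorem stmt_8 (H : ℝ → ℝ)
    (hmeas : Measurable H) (h0 : ∀ x, 0 ≤ H x) (h1 : ∀ x, H x ≤ 1)
    (hant : AntitoneOn H (Set.Ici 0))
    (hsupp : ∀ r : ℝ, 0 ≤ r → 0 < ∫⁻ x in Set.Ioi r, ENNReal.ofReal (H x))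
    (α : ℝ) (hα : 0 < α) :
    Tendsto
      (fun n : ℕ => ∫⁻ z in Set.Ioi (0:ℝ),
        ENNReal.ofReal (1 - (1 - H (z + α)) ^ (1 + n)))
      atTop (nhds ⊤)
    ∧ ∀ γ δ : ℝ, 0 < γ → 0 < δ → ∀ c : ℝ, 0 < c →
        ∀ᶠ L : ℝ in atTop,
          ENNReal.ofReal (c * Real.log L)
            ≤ ENNReal.ofReal (γ * Real.log L) *
                ∫⁻ z in Set.Ioi (0:ℝ),
                  ENNReal.ofReal
                    (1 - (1 - H (z + α)) ^ (1 + Nat.floor (δ * (γ * Real.log L)))) :=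
  stmt_8_general H h1 hant hsupp α hα
end

section
/- Let H : [0,∞) → [0,1] be measurable and integrable, and let R > 0. Then ∫_0^∞ ( 1 − (1 − H(y/R)) exp( −∫_y^∞ H(z/R) dz ) ) dy ≤ ∫_0^∞ ( 1 − exp( −R ∫_{y/R}^∞ H(z) dz ) ) dy + 1. -/
/-!
Write `h = H(·/R)` and `G(y) = ∫_y^∞ h`. The substitution `z ↦ z/R` turns `R ∫_{y/R}^∞ H` into
`G(y)`, and the left integrand is `(1 - e^{-G}) + h e^{-G}`, so it suffices that
`∫_0^∞ h e^{-G} ≤ 1`. Since `0 ≤ h ≤ 1`, the sublevel set `{G ≤ s}` has mass at most `s` for the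
measure `h dy` on `(0, ∞)`, and the layer-cake formula then bounds `∫ e^{-G} h dy` by
`∫_0^1 (-log t) dt = 1`.
-/

open MeasureTheory Real Set

lemma measurable_setIntegral_Ioi {μ : Measure ℝ} [SFinite μ] {f : ℝ → ℝ} (hf : Measurable f) :
    Measurable fun y => ∫ z in Ioi y, f z ∂μ := by
  have hF : StronglyMeasurable fun p : ℝ × ℝ => {q : ℝ × ℝ | q.1 < q.2}.indicator (f ·.2) p :=
    ((hf.comp measurable_snd).indicator
      (measurableSet_lt measurable_fst measurable_snd)).stronglyMeasurable
  convert (hF.integral_prod_right' (ν := μ)).measurable using 2 with y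
  rw [← integral_indicator measurableSet_Ioi]
  congr 1 with z

lemma mul_setIntegral_Ioi_div {E : Type*} [NormedAddCommGroup E] [NormedSpace ℝ E]
    (f : ℝ → E) (y : ℝ) {R : ℝ} (hR : 0 < R) :
    R • ∫ z in Ioi (y / R), f z = ∫ z in Ioi y, f (z / R) := by
  simpa [div_eq_mul_inv] using (integral_comp_mul_right_Ioi f y (inv_pos.2 hR)).symm

lemma integral_add_le_integral_add_of_integral_le {α : Type*} [MeasurableSpace α] {μ : Measure α}
    {f g : α → ℝ} (hg : Integrable g μ) {c : ℝ} (hgc : ∫ x, g x ∂μ ≤ c) (hc : 0 ≤ c) :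
    ∫ x, f x + g x ∂μ ≤ ∫ x, f x ∂μ + c := by
  by_cases hf : Integrable f μ
  · rw [integral_add hf hg]
    linarith
  · have hfg : ¬Integrable (fun x => f x + g x) μ := fun hfg =>
      hf (by convert hfg.sub hg using 1; ext; simp)
    rw [integral_undef hf, integral_undef hfg]
    linarith

/-- `∫₀^∞ (-log t)⁺ dt = ∫₀^∞ e^{-a} da`, by the layer-cake formula for `e^{-a}`. -/
lemma lintegral_ofReal_neg_log_Ioi : ∫⁻ t in Ioi (0 : ℝ), ENNReal.ofReal (-log t) = 1 := by
  have hlevel : ∀ t ∈ Ioi (0 : ℝ),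
      ENNReal.ofReal (-log t) = volume.restrict (Ioi 0) {a : ℝ | t ≤ exp (-a)} := by
    intro t ht
    have : {a : ℝ | t ≤ exp (-a)} = Iic (-log t) := by
      ext a
      simp only [mem_ofPred_eq, mem_Iic, ← log_le_iff_le_exp ht]
      constructor <;> intro h <;> linarith
    rw [this, Measure.restrict_apply' measurableSet_Ioi, inter_comm, Ioi_inter_Iic,
      volume_Ioc, sub_zero]
  rw [setLIntegral_congr_fun measurableSet_Ioi hlevel,
    ← lintegral_eq_lintegral_meas_le _ (ae_of_all _ fun a => (exp_pos _).le)
      measurable_neg.exp.aemeasurable,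
    ← ofReal_integral_eq_lintegral_ofReal
      (by simpa [IntegrableOn] using exp_neg_integrableOn_Ioi 0 one_pos)
      (ae_of_all _ fun a => (exp_pos _).le), integral_exp_neg_Ioi_zero, ENNReal.ofReal_one]

lemma lintegral_ofReal_exp_neg_le_one {α : Type*} [MeasurableSpace α] (μ : Measure α)
    {f : α → ℝ} (hf : Measurable f) (hμ : ∀ s, μ {x | f x ≤ s} ≤ ENNReal.ofReal s) :
    ∫⁻ x, ENNReal.ofReal (exp (-f x)) ∂μ ≤ 1 := by
  rw [lintegral_eq_lintegral_meas_le μ (f := fun x => exp (-f x))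
    (ae_of_all _ fun x => (exp_pos _).le) hf.neg.exp.aemeasurable,
    ← lintegral_ofReal_neg_log_Ioi]
  refine setLIntegral_mono measurable_log.neg.ennreal_ofReal fun t ht => ?_
  have : {x | t ≤ exp (-f x)} = {x | f x ≤ -log t} := by
    ext x
    simp only [mem_ofPred_eq, ← log_le_iff_le_exp ht]
    constructor <;> intro h <;> linarith
  exact this ▸ hμ _

lemma setIntegral_Ioi_le_sub_add {h : ℝ → ℝ} (h1 : ∀ x, h x ≤ 1) {a y : ℝ}
    (hint : IntegrableOn h (Ioi a)) (hay : a ≤ y) :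
    ∫ z in Ioi a, h z ≤ (y - a) + ∫ z in Ioi y, h z := by
  have hIoc : ∫ z in Ioc a y, h z ≤ y - a := by
    calc ∫ z in Ioc a y, h z
        ≤ ∫ _ in Ioc a y, (1 : ℝ) :=
          setIntegral_mono_on (hint.mono_set Ioc_subset_Ioi_self)
            (integrableOn_const measure_Ioc_lt_top.ne) measurableSet_Ioc fun x _ => h1 x
      _ = y - a := by simp [hay]
  rw [← Ioc_union_Ioi_eq_Ioi hay, setIntegral_union (Ioc_disjoint_Ioi le_rfl) measurableSet_Ioi
    (hint.mono_set Ioc_subset_Ioi_self) (hint.mono_set (Ioi_subset_Ioi hay))]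
  linarith

/-- The sublevel set lies in `[a, ∞)` for its infimum `a ≥ 0`, and since the tail integral is
1-Lipschitz (`setIntegral_Ioi_le_sub_add`), also `∫_a^∞ h ≤ s`. -/
lemma withDensity_setOf_setIntegral_Ioi_le {h : ℝ → ℝ} (hm : Measurable h) (h0 : ∀ x, 0 ≤ h x)
    (h1 : ∀ x, h x ≤ 1) (hint : IntegrableOn h (Ioi 0)) (s : ℝ) :
    (volume.restrict (Ioi 0)).withDensity (fun y => ENNReal.ofReal (h y))
      {y | ∫ z in Ioi y, h z ≤ s} ≤ ENNReal.ofReal s := by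
  have hmeas : MeasurableSet {y | ∫ z in Ioi y, h z ≤ s} :=
    measurable_setIntegral_Ioi hm measurableSet_Iic
  rw [withDensity_apply _ hmeas, Measure.restrict_restrict hmeas]
  set S := {y | ∫ z in Ioi y, h z ≤ s} ∩ Ioi 0
  obtain hS | hS := S.eq_empty_or_nonempty
  · simp [hS]
  have hbdd : BddBelow S := ⟨0, fun y hy => hy.2.le⟩
  set a := sInf S
  have ha : 0 ≤ a := le_csInf hS fun y hy => hy.2.le
  have hinta : IntegrableOn h (Ioi a) := hint.mono_set (Ioi_subset_Ioi ha)
  have hGa : ∫ z in Ioi a, h z ≤ s := by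
    have : (∫ z in Ioi a, h z) - s + a ≤ a := le_csInf hS fun y hy => by
      have hGy : ∫ z in Ioi y, h z ≤ s := hy.1
      have := setIntegral_Ioi_le_sub_add h1 hinta (csInf_le hbdd hy : a ≤ y)
      linarith
    linarith
  calc ∫⁻ y in S, ENNReal.ofReal (h y)
      ≤ ∫⁻ y in Ici a, ENNReal.ofReal (h y) := lintegral_mono_set fun y hy => csInf_le hbdd hy
    _ = ∫⁻ y in Ioi a, ENNReal.ofReal (h y) := by
        rw [Measure.restrict_congr_set Ioi_ae_eq_Ici.symm]
    _ = ENNReal.ofReal (∫ y in Ioi a, h y) :=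
        (ofReal_integral_eq_lintegral_ofReal hinta (ae_of_all _ h0)).symm
    _ ≤ ENNReal.ofReal s := ENNReal.ofReal_le_ofReal hGa

lemma integrableOn_mul_exp_neg_setIntegral_Ioi {h : ℝ → ℝ} (hm : Measurable h)
    (h0 : ∀ x, 0 ≤ h x) (hint : IntegrableOn h (Ioi 0)) :
    IntegrableOn (fun y => h y * exp (-∫ z in Ioi y, h z)) (Ioi 0) := by
  refine hint.mono' (hm.mul (measurable_setIntegral_Ioi hm).neg.exp).aestronglyMeasurable
    (ae_of_all _ fun y => ?_)
  have hG : 0 ≤ ∫ z in Ioi y, h z := setIntegral_nonneg measurableSet_Ioi fun z _ => h0 z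
  rw [norm_of_nonneg (mul_nonneg (h0 y) (exp_pos _).le)]
  exact mul_le_of_le_one_right (h0 y) (exp_le_one_iff.2 (by linarith))

/-- For the tail integral `G`, `(e^{-G})' = h e^{-G}`, so the integral is really `1 - e^{-G(0)}`;
the layer-cake formula for the measure `h dy` gives the bound without differentiating `G`. -/
lemma setIntegral_mul_exp_neg_setIntegral_Ioi_le_one {h : ℝ → ℝ} (hm : Measurable h)
    (h0 : ∀ x, 0 ≤ h x) (h1 : ∀ x, h x ≤ 1)
    (hint : IntegrableOn h (Ioi 0)) :
    ∫ y in Ioi 0, h y * exp (-∫ z in Ioi y, h z) ≤ 1 := by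
  have hG := measurable_setIntegral_Ioi (μ := volume) hm
  rw [integral_eq_lintegral_of_nonneg_ae (f := fun y => h y * exp (-∫ z in Ioi y, h z))
    (ae_of_all _ fun y => mul_nonneg (h0 y) (exp_pos _).le)
    (hm.mul hG.neg.exp).aestronglyMeasurable]
  refine ENNReal.toReal_le_of_le_ofReal zero_le_one ?_
  calc ∫⁻ y in Ioi 0, ENNReal.ofReal (h y * exp (-∫ z in Ioi y, h z))
      = ∫⁻ y, ENNReal.ofReal (exp (-∫ z in Ioi y, h z))
          ∂(volume.restrict (Ioi 0)).withDensity (fun y => ENNReal.ofReal (h y)) := by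
        rw [lintegral_withDensity_eq_lintegral_mul _ hm.ennreal_ofReal
          (g := fun y => ENNReal.ofReal (exp (-∫ z in Ioi y, h z))) hG.neg.exp.ennreal_ofReal]
        exact lintegral_congr fun y => ENNReal.ofReal_mul (h0 y)
    _ ≤ 1 := lintegral_ofReal_exp_neg_le_one _ hG
          (withDensity_setOf_setIntegral_Ioi_le hm h0 h1 hint)
    _ = ENNReal.ofReal 1 := ENNReal.ofReal_one.symm

/-- For `H : [0,∞) → [0,1]` measurable, integrable and `R > 0`,
`∫_0^∞ (1 − (1 − H(y/R)) exp(−∫_y^∞ H(z/R) dz)) dy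
  ≤ ∫_0^∞ (1 − exp(−R ∫_{y/R}^∞ H(z) dz)) dy + 1`. -/
theorem stmt_12 (H : ℝ → ℝ)
    (hmeas : Measurable H) (h0 : ∀ x, 0 ≤ H x) (h1 : ∀ x, H x ≤ 1)
    (hint : IntegrableOn H (Set.Ioi 0)) (R : ℝ) (hR : 0 < R) :
    ∫ y in Set.Ioi (0:ℝ),
        (1 - (1 - H (y / R)) * Real.exp (-(∫ z in Set.Ioi y, H (z / R))))
      ≤ (∫ y in Set.Ioi (0:ℝ),
          (1 - Real.exp (-(R * ∫ z in Set.Ioi (y / R), H z)))) + 1 := by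
  have hm : Measurable fun y => H (y / R) := hmeas.comp (measurable_id.div_const R)
  have hint_R : IntegrableOn (fun y => H (y / R)) (Ioi 0) := by
    simpa [div_eq_mul_inv] using
      (integrableOn_Ioi_comp_mul_right_iff H 0 (inv_pos.2 hR)).2 (by simpa using hint)
  have hsplit : ∀ y, 1 - (1 - H (y / R)) * exp (-∫ z in Ioi y, H (z / R))
      = (1 - exp (-∫ z in Ioi y, H (z / R))) + H (y / R) * exp (-∫ z in Ioi y, H (z / R)) :=
    fun y => by ring
  simp_rw [hsplit, ← smul_eq_mul R, mul_setIntegral_Ioi_div H _ hR]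
  exact integral_add_le_integral_add_of_integral_le
    (integrableOn_mul_exp_neg_setIntegral_Ioi hm (fun _ => h0 _) hint_R)
    (setIntegral_mul_exp_neg_setIntegral_Ioi_le_one hm (fun _ => h0 _) (fun _ => h1 _) hint_R)
    zero_le_one
end

section
/- Let H : [0,∞) → [0,∞) be measurable and integrable, and let R > 0 and x > 0. Then ∫_0^∞ ( 1 − exp( −R ∫_{y/R}^∞ H(z) dz ) ) dy ≤ R x + R² ∫_x^∞ z H(z) dz. -/
open MeasureTheory Real Set
open scoped ENNReal

/-!
Write `G(y) = ∫_{y/R}^∞ H`. Since `1 - e^{-RG} ≤ min 1 (RG)`, splitting the `y`-integral at `Rx`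
bounds it by `Rx + R ∫_{Rx}^∞ G`, and by Tonelli `∫_{Rx}^∞ G(y) dy = ∫ H(z) (Rz - Rx)⁺ dz`, which is
at most `R ∫_x^∞ z H(z) dz`.

The argument runs on lower Lebesgue integrals because the Bochner integral `∫_x^∞ z H(z) dz` is `0`
when `z H(z)` is not integrable. That case needs the reverse estimate: as `G ≤ M := ∫_0^∞ H` and
`1 - e^{-s} ≥ s e^{-s}`, we get `1 - e^{-RG} ≥ R e^{-RM} G`, so the left-hand integrand is not
integrable either and the left-hand side is `0` too.
-/

lemma mul_exp_neg_le_one_sub_exp_neg (t : ℝ) : t * exp (-t) ≤ 1 - exp (-t) := by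
  have hinv : exp (-t) * exp t = 1 := by rw [← exp_add, neg_add_cancel, exp_zero]
  nlinarith [add_one_le_exp t, exp_pos (-t)]

lemma lintegral_Ioi_lintegral_Ioi_div {g : ℝ → ℝ≥0∞} (hg : Measurable g) {R : ℝ} (hR : 0 < R)
    (a : ℝ) :
    ∫⁻ y in Ioi a, ∫⁻ z in Ioi (y / R), g z = ∫⁻ z, g z * ENNReal.ofReal (R * z - a) := by
  set k : ℝ → ℝ → ℝ≥0∞ := fun y z =>
    {p : ℝ × ℝ | p.1 < R * p.2}.indicator (fun p => g p.2) (y, z)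
  have hk : Measurable (Function.uncurry k) := (hg.comp measurable_snd).indicator
    (measurableSet_lt measurable_fst (measurable_snd.const_mul R))
  have hy : ∀ y, ∫⁻ z in Ioi (y / R), g z = ∫⁻ z, k y z := fun y => by
    rw [← lintegral_indicator measurableSet_Ioi]
    congr! 1 with z
    simp [k, indicator, div_lt_iff₀ hR, mul_comm]
  have hz : ∀ z, ∫⁻ y in Ioi a, k y z = g z * ENNReal.ofReal (R * z - a) := fun z => by
    have : (k · z) = (Iio (R * z)).indicator fun _ => g z := by ext y; simp [k, indicator]
    rw [this, lintegral_indicator measurableSet_Iio, setLIntegral_const,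
      Measure.restrict_apply measurableSet_Iio, Iio_inter_Ioi, Real.volume_Ioo]
  simp_rw [hy, ← hz]
  exact lintegral_lintegral_swap hk.aemeasurable

lemma antitone_lintegral_Ioi_div (g : ℝ → ℝ≥0∞) {R : ℝ} (hR : 0 < R) :
    Antitone fun y => ∫⁻ z in Ioi (y / R), g z := fun _ _ hyy' =>
  lintegral_mono_set (Ioi_subset_Ioi (div_le_div_of_nonneg_right hyy' hR.le))

lemma setLIntegral_Ioi_zero_le_add {φ G : ℝ → ℝ≥0∞} {a : ℝ} (ha : 0 ≤ a)
    (hφ_le_one : ∀ y ∈ Ioc 0 a, φ y ≤ 1) (hφ_le : ∀ y ∈ Ioi a, φ y ≤ G y) :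
    ∫⁻ y in Ioi 0, φ y ≤ ENNReal.ofReal a + ∫⁻ y in Ioi a, G y := by
  rw [← Ioc_union_Ioi_eq_Ioi ha, lintegral_union measurableSet_Ioi (Ioc_disjoint_Ioi le_rfl)]
  gcongr ?_ + ?_
  · calc ∫⁻ y in Ioc 0 a, φ y ≤ ∫⁻ _ in Ioc 0 a, 1 := setLIntegral_mono' measurableSet_Ioc hφ_le_one
      _ = ENNReal.ofReal a := by simp
  · exact setLIntegral_mono' measurableSet_Ioi hφ_le

lemma lintegral_mul_ofReal_sub_le (g : ℝ → ℝ≥0∞) {R x : ℝ} (hR : 0 ≤ R) (hx : 0 ≤ x) :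
    ∫⁻ z, g z * ENNReal.ofReal (R * z - R * x)
      ≤ ENNReal.ofReal R * ∫⁻ z in Ioi x, ENNReal.ofReal z * g z := by
  rw [← lintegral_const_mul' _ _ ENNReal.ofReal_ne_top, ← lintegral_indicator measurableSet_Ioi]
  refine lintegral_mono fun z => ?_
  by_cases hz : z ∈ Ioi x
  · rw [indicator_of_mem hz, ← mul_assoc, ← ENNReal.ofReal_mul hR, mul_comm]
    gcongr
    nlinarith
  · rw [ENNReal.ofReal_of_nonpos (by nlinarith [not_lt.1 (mem_Ioi.not.1 hz)]), mul_zero]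
    exact zero_le

lemma setLIntegral_Ioi_ofReal_mul_le (g : ℝ → ℝ≥0∞) {R : ℝ} (hR : 0 ≤ R) (x : ℝ) :
    ENNReal.ofReal R * ∫⁻ z in Ioi x, ENNReal.ofReal z * g z
      ≤ ∫⁻ z, g z * ENNReal.ofReal (R * z) := by
  rw [← lintegral_const_mul' _ _ ENNReal.ofReal_ne_top]
  refine (setLIntegral_le_lintegral _ _).trans (lintegral_mono fun z => ?_)
  rw [← mul_assoc, ← ENNReal.ofReal_mul hR, mul_comm]

lemma lintegral_one_sub_exp_le {g : ℝ → ℝ≥0∞} (hg : Measurable g) {R x : ℝ} (hR : 0 < R)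
    (hx : 0 ≤ x) :
    ∫⁻ y in Ioi 0, ENNReal.ofReal (1 - exp (-(R * (∫⁻ z in Ioi (y / R), g z).toReal)))
      ≤ ENNReal.ofReal (R * x) + ENNReal.ofReal R ^ 2 * ∫⁻ z in Ioi x, ENNReal.ofReal z * g z := by
  set G := fun y => ∫⁻ z in Ioi (y / R), g z
  have hφ_le_one (y : ℝ) : ENNReal.ofReal (1 - exp (-(R * (G y).toReal))) ≤ 1 :=
    ENNReal.ofReal_le_one.2 (by linarith [exp_pos (-(R * (G y).toReal))])
  have hφ_le (y : ℝ) : ENNReal.ofReal (1 - exp (-(R * (G y).toReal))) ≤ ENNReal.ofReal R * G y := by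
    grw [← ENNReal.ofReal_toReal_le (a := G y), ← ENNReal.ofReal_mul hR.le]
    exact ENNReal.ofReal_le_ofReal (by linarith [add_one_le_exp (-(R * (G y).toReal))])
  calc _ ≤ ENNReal.ofReal (R * x) + ∫⁻ y in Ioi (R * x), ENNReal.ofReal R * G y :=
        setLIntegral_Ioi_zero_le_add (by positivity) (fun y _ => hφ_le_one y) (fun y _ => hφ_le y)
    _ = ENNReal.ofReal (R * x) + ENNReal.ofReal R * ∫⁻ z, g z * ENNReal.ofReal (R * z - R * x) := by
        rw [lintegral_const_mul _ (antitone_lintegral_Ioi_div g hR).measurable,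
          lintegral_Ioi_lintegral_Ioi_div hg hR]
    _ ≤ _ := by
        rw [sq, mul_assoc]
        gcongr
        exact lintegral_mul_ofReal_sub_le g hR.le hx

lemma le_lintegral_one_sub_exp {g : ℝ → ℝ≥0∞} (hg : Measurable g) {R : ℝ} (hR : 0 < R)
    (hg_fin : ∫⁻ z in Ioi 0, g z ≠ ∞) (x : ℝ) :
    ENNReal.ofReal (R * exp (-(R * (∫⁻ z in Ioi 0, g z).toReal)))
        * (ENNReal.ofReal R * ∫⁻ z in Ioi x, ENNReal.ofReal z * g z)
      ≤ ∫⁻ y in Ioi 0, ENNReal.ofReal (1 - exp (-(R * (∫⁻ z in Ioi (y / R), g z).toReal))) := by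
  set M := (∫⁻ z in Ioi 0, g z).toReal
  set G := fun y => ∫⁻ z in Ioi (y / R), g z
  have hG_meas : Measurable G := (antitone_lintegral_Ioi_div g hR).measurable
  have hlower : ∀ y ∈ Ioi (0 : ℝ), ENNReal.ofReal (R * exp (-(R * M))) * G y
      ≤ ENNReal.ofReal (1 - exp (-(R * (G y).toReal))) := fun y hy => by
    have hGy : G y ≤ ∫⁻ z in Ioi 0, g z := by
      simpa [G] using antitone_lintegral_Ioi_div g hR (le_of_lt hy)
    have ht : (G y).toReal ≤ M := ENNReal.toReal_mono hg_fin hGy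
    conv_lhs => rw [← ENNReal.ofReal_toReal (ne_top_of_le_ne_top hg_fin hGy),
      ← ENNReal.ofReal_mul (by positivity)]
    refine ENNReal.ofReal_le_ofReal ?_
    calc R * exp (-(R * M)) * (G y).toReal = R * (G y).toReal * exp (-(R * M)) := by ring
      _ ≤ R * (G y).toReal * exp (-(R * (G y).toReal)) := by gcongr
      _ ≤ _ := mul_exp_neg_le_one_sub_exp_neg _
  calc _ ≤ ENNReal.ofReal (R * exp (-(R * M))) * ∫⁻ z, g z * ENNReal.ofReal (R * z - 0) := by
        simp_rw [sub_zero]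
        gcongr
        exact setLIntegral_Ioi_ofReal_mul_le g hR.le x
    _ = ∫⁻ y in Ioi 0, ENNReal.ofReal (R * exp (-(R * M))) * G y := by
        rw [← lintegral_Ioi_lintegral_Ioi_div hg hR, lintegral_const_mul _ hG_meas]
    _ ≤ _ := setLIntegral_mono' measurableSet_Ioi hlower

lemma integral_one_sub_exp_eq_toReal_lintegral {H : ℝ → ℝ} (hmeas : Measurable H)
    (h0 : ∀ z, 0 ≤ H z) {R : ℝ} (hR : 0 < R) :
    ∫ y in Ioi 0, (1 - exp (-(R * ∫ z in Ioi (y / R), H z))) =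
      (∫⁻ y in Ioi 0, ENNReal.ofReal
        (1 - exp (-(R * (∫⁻ z in Ioi (y / R), ENNReal.ofReal (H z)).toReal)))).toReal := by
  set G := fun y => ∫⁻ z in Ioi (y / R), ENNReal.ofReal (H z)
  have hinner (y : ℝ) : ∫ z in Ioi (y / R), H z = (G y).toReal :=
    integral_eq_lintegral_of_nonneg_ae (ae_of_all _ h0) hmeas.aestronglyMeasurable
  have hφ_meas : Measurable fun y => 1 - exp (-(R * (G y).toReal)) :=
    measurable_const.sub
      ((antitone_lintegral_Ioi_div _ hR).measurable.ennreal_toReal.const_mul R).neg.exp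
  have hφ_nonneg (y : ℝ) : 0 ≤ 1 - exp (-(R * (G y).toReal)) := by
    simp only [sub_nonneg, exp_le_one_iff, neg_nonpos]
    positivity
  simp_rw [hinner]
  exact integral_eq_lintegral_of_nonneg_ae (ae_of_all _ hφ_nonneg) hφ_meas.aestronglyMeasurable

/-- For `H : [0,∞) → [0,∞)` measurable and integrable, and `R, x > 0`,
`∫_0^∞ (1 − exp(−R ∫_{y/R}^∞ H(z) dz)) dy ≤ R x + R² ∫_x^∞ z H(z) dz`. -/
theorem stmt_13 (H : ℝ → ℝ)
    (hmeas : Measurable H) (h0 : ∀ x, 0 ≤ H x)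
    (hint : IntegrableOn H (Set.Ioi 0)) (R x : ℝ) (hR : 0 < R) (hx : 0 < x) :
    ∫ y in Set.Ioi (0:ℝ), (1 - Real.exp (-(R * ∫ z in Set.Ioi (y / R), H z)))
      ≤ R * x + R ^ 2 * ∫ z in Set.Ioi x, z * H z := by
  set g := fun z => ENNReal.ofReal (H z)
  have hg : Measurable g := hmeas.ennreal_ofReal
  set T := ∫⁻ z in Ioi x, ENNReal.ofReal z * g z with hT_def
  have htail : ∫ z in Ioi x, z * H z = T.toReal := by
    rw [integral_eq_lintegral_of_nonneg_ae ((ae_restrict_iff' measurableSet_Ioi).2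
      (ae_of_all _ fun z hz => mul_nonneg (hx.trans hz).le (h0 z))) (by fun_prop)]
    exact congrArg _ (setLIntegral_congr_fun measurableSet_Ioi fun z hz =>
      ENNReal.ofReal_mul (hx.trans hz).le)
  have hRHS : 0 ≤ R * x + R ^ 2 * ∫ z in Ioi x, z * H z := by
    rw [htail]; positivity
  rw [integral_one_sub_exp_eq_toReal_lintegral hmeas h0 hR]
  by_cases hT : T = ∞
  · have hc : ENNReal.ofReal (R * exp (-(R * (∫⁻ z in Ioi 0, g z).toReal))) ≠ 0 :=
      (ENNReal.ofReal_pos.2 (by positivity)).ne'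
    have hlower := le_lintegral_one_sub_exp hg hR hint.lintegral_lt_top.ne x
    rw [← hT_def, hT, ENNReal.mul_top (ENNReal.ofReal_pos.2 hR).ne', ENNReal.mul_top hc,
      top_le_iff] at hlower
    rwa [hlower, ENNReal.toReal_top]
  · refine ENNReal.toReal_le_of_le_ofReal hRHS
      ((lintegral_one_sub_exp_le hg hR hx.le).trans_eq ?_)
    rw [htail, ENNReal.ofReal_add (by positivity) (by positivity),
      ENNReal.ofReal_mul (sq_nonneg R), ENNReal.ofReal_pow hR.le, ENNReal.ofReal_toReal hT]
end

section
/- Let H(r) = β exp(−(r/r_c)^η) with β > 0, r_c > 0, η > 0, and let θ = max{1/η, 2/η − 1}. Then limsup_{R → ∞} (1 / (R (ln R)^θ)) ∫_0^∞ ( 1 − exp( −R ∫_{y/R}^∞ H(z) dz ) ) dy ≤ r_c + β r_c² / η. -/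
/-!
Write `T(x) = ∫_x^∞ H`. The substitution `y = R x` turns the ratio into
`(ln R)^{-θ} ∫_0^∞ (1 - e^{-R T(x)}) dx`. Bound the integrand by `1` below
`x₀ = r_c (c ln R)^{1/η}` and by `R T(x)` above it. Splitting the exponent `(z/r_c)^η` of the
stretched exponential into the parts `1 - δ` and `δ` gives `T(x) ≲ e^{-(1-δ)(x/r_c)^η}`, and doing
it once more gives `∫_{x₀}^∞ T ≲ e^{-(1-2δ) c ln R} = R^{-(1-2δ)c}`. For `(1 - 2δ) c > 1` the far
part vanishes in the limit, while the near part is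
`r_c c^{1/η} (ln R)^{1/η} ≤ r_c c^{1/η} (ln R)^θ`.
Finally `c = (1 + β r_c/η)^η` gives `r_c c^{1/η} = r_c + β r_c²/η`.
-/

open MeasureTheory Real Filter Set Topology

theorem integrableOn_exp_neg_mul_div_rpow {η a κ : ℝ} (hη : 0 < η) (ha : 0 < a) (hκ : 0 < κ) :
    IntegrableOn (fun z : ℝ => exp (-(κ * (z / a) ^ η))) (Ioi 0) := by
  have h := integrableOn_rpow_mul_exp_neg_mul_rpow (s := 0) (by norm_num) hη hκ
  have := (integrableOn_Ioi_comp_mul_left_iff (fun x : ℝ => exp (-κ * x ^ η)) 0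
    (inv_pos.mpr ha)).mpr (by simpa using h)
  refine this.congr_fun (fun x _ => ?_) measurableSet_Ioi
  simp only [neg_mul, div_eq_inv_mul]

theorem setIntegral_exp_neg_add_mul_le {u : ℝ → ℝ} {x a b : ℝ} (ha : 0 ≤ a)
    (hu : ∀ z ∈ Ioi x, u x ≤ u z) (hint : IntegrableOn (fun z => exp (-(b * u z))) (Ioi x)) :
    ∫ z in Ioi x, exp (-((a + b) * u z)) ≤ exp (-(a * u x)) * ∫ z in Ioi x, exp (-(b * u z)) := by
  rw [← integral_const_mul]
  refine integral_mono_of_nonneg (ae_of_all _ fun z => (exp_pos _).le) (hint.const_mul _) ?_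
  filter_upwards [ae_restrict_mem measurableSet_Ioi] with z hz
  rw [← exp_add]
  exact exp_le_exp.mpr (by nlinarith [mul_le_mul_of_nonneg_left (hu z hz) ha])

theorem integral_comp_div_Ioi_zero (g : ℝ → ℝ) {R : ℝ} (hR : 0 < R) :
    ∫ y in Ioi 0, g (y / R) = R * ∫ x in Ioi 0, g x := by
  simpa [div_eq_inv_mul] using integral_comp_mul_left_Ioi g 0 (inv_pos.mpr hR)

theorem setIntegral_one_sub_exp_neg_le {g : ℝ → ℝ} {x₀ : ℝ} (hx₀ : 0 ≤ x₀) (hg : ∀ x, 0 ≤ g x)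
    (hmeas : AEStronglyMeasurable g (volume.restrict (Ioi 0))) (hint : IntegrableOn g (Ioi x₀)) :
    ∫ x in Ioi 0, (1 - exp (-g x)) ≤ x₀ + ∫ x in Ioi x₀, g x := by
  have hF0 (x : ℝ) : 0 ≤ 1 - exp (-g x) := by
    linarith [exp_le_one_iff.mpr (neg_nonpos.mpr (hg x))]
  have hF1 (x : ℝ) : 1 - exp (-g x) ≤ 1 := by linarith [exp_pos (-g x)]
  have hFg (x : ℝ) : 1 - exp (-g x) ≤ g x := by linarith [add_one_le_exp (-g x)]
  have hFmeas : AEStronglyMeasurable (fun x => 1 - exp (-g x)) (volume.restrict (Ioi 0)) :=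
    (continuous_const.sub (continuous_exp.comp continuous_neg)).comp_aestronglyMeasurable hmeas
  have hint_near : IntegrableOn (fun x => 1 - exp (-g x)) (Ioc 0 x₀) :=
    Integrable.mono' (integrableOn_const measure_Ioc_lt_top.ne)
      (hFmeas.mono_set Ioc_subset_Ioi_self)
      (ae_of_all _ fun x => (norm_of_nonneg (hF0 x)).trans_le (hF1 x))
  have hint_far : IntegrableOn (fun x => 1 - exp (-g x)) (Ioi x₀) :=
    Integrable.mono' hint (hFmeas.mono_set (Ioi_subset_Ioi hx₀))
      (ae_of_all _ fun x => (norm_of_nonneg (hF0 x)).trans_le (hFg x))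
  rw [← Ioc_union_Ioi_eq_Ioi hx₀,
    setIntegral_union (Ioc_disjoint_Ioi le_rfl) measurableSet_Ioi hint_near hint_far]
  gcongr ?_ + ?_
  · calc ∫ x in Ioc 0 x₀, (1 - exp (-g x)) ≤ ∫ _ in Ioc 0 x₀, (1 : ℝ) :=
          setIntegral_mono_on hint_near (integrableOn_const measure_Ioc_lt_top.ne)
            measurableSet_Ioc fun x _ => hF1 x
      _ = x₀ := by simp [hx₀]
  · exact setIntegral_mono_on hint_far hint measurableSet_Ioi fun x _ => hFg x

theorem limsup_le_of_eventually_le_add_rpow_neg {f : ℝ → ℝ} {C K s : ℝ} (hs : 0 < s)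
    (hf0 : ∀ᶠ R in atTop, 0 ≤ f R) (hf : ∀ᶠ R in atTop, f R ≤ C + K * R ^ (-s)) :
    limsup f atTop ≤ C := by
  have hlim : Tendsto (fun R : ℝ => C + K * R ^ (-s)) atTop (𝓝 C) := by
    simpa using tendsto_const_nhds.add ((tendsto_rpow_neg_atTop hs).const_mul K)
  calc limsup f atTop ≤ limsup (fun R : ℝ => C + K * R ^ (-s)) atTop :=
        limsup_le_limsup hf (IsBoundedUnder.isCoboundedUnder_le ⟨0, eventually_map.mpr hf0⟩)
          hlim.isBoundedUnder_le
    _ = C := hlim.limsup_eq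

section Rayleigh

variable {β rc η : ℝ}

noncomputable def rayleighTail (β rc η x : ℝ) : ℝ := ∫ z in Ioi x, β * exp (-((z / rc) ^ η))

noncomputable def rayleighRatio (β rc η θ R : ℝ) : ℝ :=
  (1 / (R * log R ^ θ)) * ∫ y in Ioi 0, (1 - exp (-(R * rayleighTail β rc η (y / R))))

theorem setIntegral_Ioi_exp_neg_mul_div_rpow_le (hrc : 0 < rc) (hη : 0 < η) {κ δ x : ℝ}
    (hδ : 0 < δ) (hδκ : δ ≤ κ) (hx : 0 ≤ x) :
    ∫ z in Ioi x, exp (-(κ * (z / rc) ^ η)) ≤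
      exp (-((κ - δ) * (x / rc) ^ η)) * ∫ z in Ioi 0, exp (-(δ * (z / rc) ^ η)) := by
  have hint := integrableOn_exp_neg_mul_div_rpow hη hrc hδ
  have hmono : ∀ z ∈ Ioi x, (x / rc) ^ η ≤ (z / rc) ^ η := fun z hz => by
    gcongr
    exact le_of_lt hz
  calc ∫ z in Ioi x, exp (-(κ * (z / rc) ^ η))
      = ∫ z in Ioi x, exp (-((κ - δ + δ) * (z / rc) ^ η)) := by rw [sub_add_cancel]
    _ ≤ exp (-((κ - δ) * (x / rc) ^ η)) * ∫ z in Ioi x, exp (-(δ * (z / rc) ^ η)) :=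
        setIntegral_exp_neg_add_mul_le (sub_nonneg.mpr hδκ) hmono
          (hint.mono_set (Ioi_subset_Ioi hx))
    _ ≤ _ := mul_le_mul_of_nonneg_left (setIntegral_mono_set hint
          (ae_of_all _ fun z => (exp_pos _).le) (Ioi_subset_Ioi hx).eventuallyLE) (exp_pos _).le

theorem rayleighTail_nonneg (hβ : 0 ≤ β) (x : ℝ) : 0 ≤ rayleighTail β rc η x :=
  setIntegral_nonneg measurableSet_Ioi fun _ _ => by positivity

theorem antitoneOn_rayleighTail (hβ : 0 ≤ β) (hrc : 0 < rc) (hη : 0 < η) :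
    AntitoneOn (rayleighTail β rc η) (Ici 0) := by
  have hint : IntegrableOn (fun z => β * exp (-((z / rc) ^ η))) (Ioi 0) := by
    have h := (integrableOn_exp_neg_mul_div_rpow hη hrc one_pos).const_mul β
    simp only [one_mul] at h
    exact h
  intro x hx y _ hxy
  exact setIntegral_mono_set (hint.mono_set (Ioi_subset_Ioi hx))
    (ae_of_all _ fun _ => by positivity) (Ioi_subset_Ioi hxy).eventuallyLE

theorem rayleighTail_le (hβ : 0 ≤ β) (hrc : 0 < rc) (hη : 0 < η) {δ x : ℝ} (hδ : 0 < δ)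
    (hδ1 : δ ≤ 1) (hx : 0 ≤ x) :
    rayleighTail β rc η x ≤
      β * (∫ z in Ioi 0, exp (-(δ * (z / rc) ^ η))) * exp (-((1 - δ) * (x / rc) ^ η)) := by
  have h := setIntegral_Ioi_exp_neg_mul_div_rpow_le hrc hη hδ hδ1 hx
  simp only [one_mul] at h
  rw [rayleighTail, integral_const_mul, mul_assoc, mul_comm (∫ _ in _, _)]
  gcongr

theorem integrableOn_rayleighTail (hβ : 0 ≤ β) (hrc : 0 < rc) (hη : 0 < η) :
    IntegrableOn (rayleighTail β rc η) (Ioi 0) := by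
  refine Integrable.mono'
    ((integrableOn_exp_neg_mul_div_rpow hη hrc (by norm_num : (0 : ℝ) < 1 - 1 / 2)).const_mul
      (β * ∫ z in Ioi 0, exp (-(1 / 2 * (z / rc) ^ η))))
    (aemeasurable_restrict_of_antitoneOn measurableSet_Ioi
      ((antitoneOn_rayleighTail hβ hrc hη).mono Ioi_subset_Ici_self)).aestronglyMeasurable ?_
  filter_upwards [ae_restrict_mem measurableSet_Ioi] with x hx
  rw [norm_of_nonneg (rayleighTail_nonneg hβ x)]
  exact rayleighTail_le hβ hrc hη (by norm_num) (by norm_num) (le_of_lt hx)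

theorem setIntegral_rayleighTail_le (hβ : 0 ≤ β) (hrc : 0 < rc) (hη : 0 < η) {δ x₀ : ℝ}
    (hδ : 0 < δ) (hδ2 : δ ≤ 1 / 2) (hx₀ : 0 ≤ x₀) :
    ∫ x in Ioi x₀, rayleighTail β rc η x ≤
      β * (∫ z in Ioi 0, exp (-(δ * (z / rc) ^ η))) ^ 2 *
        exp (-((1 - 2 * δ) * (x₀ / rc) ^ η)) := by
  set M := ∫ z in Ioi 0, exp (-(δ * (z / rc) ^ η))
  have hM : 0 ≤ M := setIntegral_nonneg measurableSet_Ioi fun _ _ => (exp_pos _).le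
  have hint := (integrableOn_exp_neg_mul_div_rpow hη hrc (by linarith : 0 < 1 - δ)).mono_set
    (Ioi_subset_Ioi hx₀)
  have htail := setIntegral_Ioi_exp_neg_mul_div_rpow_le hrc hη hδ (by linarith) hx₀ (κ := 1 - δ)
  rw [show 1 - δ - δ = 1 - 2 * δ by ring] at htail
  calc ∫ x in Ioi x₀, rayleighTail β rc η x
      ≤ ∫ x in Ioi x₀, β * M * exp (-((1 - δ) * (x / rc) ^ η)) :=
        setIntegral_mono_on ((integrableOn_rayleighTail hβ hrc hη).mono_set (Ioi_subset_Ioi hx₀))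
          (hint.const_mul _) measurableSet_Ioi fun x hx =>
            rayleighTail_le hβ hrc hη hδ (by linarith) (hx₀.trans (le_of_lt hx))
    _ = β * M * ∫ x in Ioi x₀, exp (-((1 - δ) * (x / rc) ^ η)) := integral_const_mul _ _
    _ ≤ β * M * (exp (-((1 - 2 * δ) * (x₀ / rc) ^ η)) * M) := by gcongr
    _ = β * M ^ 2 * exp (-((1 - 2 * δ) * (x₀ / rc) ^ η)) := by ring

theorem integral_one_sub_exp_neg_rayleighTail_le (hβ : 0 ≤ β) (hrc : 0 < rc) (hη : 0 < η)
    {δ c R : ℝ} (hδ : 0 < δ) (hδ2 : δ ≤ 1 / 2) (hc : 0 ≤ c) (hR : 1 ≤ R) :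
    ∫ x in Ioi 0, (1 - exp (-(R * rayleighTail β rc η x))) ≤
      rc * (c * log R) ^ (1 / η) +
        β * (∫ z in Ioi 0, exp (-(δ * (z / rc) ^ η))) ^ 2 * R ^ (1 - (1 - 2 * δ) * c) := by
  have hR0 : 0 < R := by linarith
  have hL : 0 ≤ c * log R := mul_nonneg hc (log_nonneg hR)
  set x₀ := rc * (c * log R) ^ (1 / η)
  have hx₀ : 0 ≤ x₀ := by positivity
  have hu : (x₀ / rc) ^ η = c * log R := by
    rw [mul_div_cancel_left₀ _ hrc.ne', ← rpow_mul hL, one_div_mul_cancel hη.ne', rpow_one]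
  have hmeas := (aemeasurable_restrict_of_antitoneOn (μ := volume) measurableSet_Ioi
    ((antitoneOn_rayleighTail hβ hrc hη).mono Ioi_subset_Ici_self)).aestronglyMeasurable
  refine (setIntegral_one_sub_exp_neg_le hx₀
    (fun x => mul_nonneg hR0.le (rayleighTail_nonneg hβ x)) (hmeas.const_mul R)
    (((integrableOn_rayleighTail hβ hrc hη).mono_set (Ioi_subset_Ioi hx₀)).const_mul R)).trans ?_
  rw [integral_const_mul]
  gcongr ?_ + ?_
  · exact le_rfl
  calc R * ∫ x in Ioi x₀, rayleighTail β rc η x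
      ≤ R * (β * (∫ z in Ioi 0, exp (-(δ * (z / rc) ^ η))) ^ 2 *
          exp (-((1 - 2 * δ) * (x₀ / rc) ^ η))) := by
        gcongr
        exact setIntegral_rayleighTail_le hβ hrc hη hδ hδ2 hx₀
    _ = _ := by
        have hpow : exp (-((1 - 2 * δ) * (c * log R))) = R ^ (-((1 - 2 * δ) * c)) := by
          rw [rpow_def_of_pos hR0]
          ring_nf
        rw [hu, hpow, rpow_neg hR0.le, rpow_sub hR0, rpow_one]
        ring

theorem rayleighRatio_nonneg (hβ : 0 ≤ β) {θ R : ℝ} (hR : 1 ≤ R) :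
    0 ≤ rayleighRatio β rc η θ R := by
  have hR0 : 0 < R := by linarith
  have hlog := log_nonneg hR
  refine mul_nonneg (by positivity) (setIntegral_nonneg measurableSet_Ioi fun y _ => ?_)
  have := mul_nonneg hR0.le (rayleighTail_nonneg (rc := rc) (η := η) hβ (y / R))
  linarith [exp_le_one_iff.mpr (neg_nonpos.mpr this)]

theorem eventually_rayleighRatio_le (hβ : 0 ≤ β) (hrc : 0 < rc) (hη : 0 < η) {θ c : ℝ}
    (hθ : 1 / η ≤ θ) (hc : 1 < c) :
    ∃ K s : ℝ, 0 < s ∧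
      ∀ᶠ R in atTop, rayleighRatio β rc η θ R ≤ rc * c ^ (1 / η) + K * R ^ (-s) := by
  set δ := (c - 1) / (4 * c)
  have hc0 : 0 < c := by linarith
  have hδ : 0 < δ := by positivity
  have hδ2 : δ ≤ 1 / 2 := by
    rw [div_le_iff₀ (by positivity)]
    linarith
  have hexp : 1 - (1 - 2 * δ) * c = -((c - 1) / 2) := by
    simp only [δ]
    field_simp
    ring
  set K := β * (∫ z in Ioi 0, exp (-(δ * (z / rc) ^ η))) ^ 2
  refine ⟨K, (c - 1) / 2, by linarith, ?_⟩
  filter_upwards [eventually_ge_atTop (exp 1)] with R hR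
  have hR1 : 1 ≤ R := le_trans (one_le_exp zero_le_one) hR
  have hR0 : 0 < R := by linarith
  have hL : 1 ≤ log R := (le_log_iff_exp_le hR0).mpr hR
  have hLθ : 1 ≤ log R ^ θ := one_le_rpow hL (le_trans (by positivity) hθ)
  have hLη : log R ^ (1 / η) ≤ log R ^ θ := rpow_le_rpow_of_exponent_le hL hθ
  have hK : 0 ≤ K * R ^ (-((c - 1) / 2)) := by positivity
  have hmain := integral_one_sub_exp_neg_rayleighTail_le hβ hrc hη hδ hδ2 hc0.le hR1
  rw [hexp, mul_rpow hc0.le (by linarith)] at hmain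
  have hscale := integral_comp_div_Ioi_zero (fun x => 1 - exp (-(R * rayleighTail β rc η x))) hR0
  have hratio : rayleighRatio β rc η θ R =
      (log R ^ θ)⁻¹ * ∫ x in Ioi 0, (1 - exp (-(R * rayleighTail β rc η x))) := by
    rw [rayleighRatio, hscale]
    field_simp
  rw [hratio, inv_mul_le_iff₀ (by linarith)]
  nlinarith [mul_le_mul_of_nonneg_left hLη (by positivity : 0 ≤ rc * c ^ (1 / η)),
    mul_le_mul_of_nonneg_right hLθ hK]

end Rayleigh

/-- For `H(r) = β e^{−(r/r_c)^η}` and `θ = max{1/η, 2/η − 1}`,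
`limsup_{R→∞} (1/(R (ln R)^θ)) ∫_0^∞ (1 − exp(−R ∫_{y/R}^∞ H(z) dz)) dy
  ≤ r_c + β r_c²/η`. -/
theorem stmt_17 (β rc η θ : ℝ) (hβ : 0 < β) (hrc : 0 < rc) (hη : 0 < η)
    (hθ : θ = max (1 / η) (2 / η - 1)) :
    Filter.limsup
      (fun R : ℝ =>
        (1 / (R * (Real.log R) ^ θ)) *
          ∫ y in Set.Ioi (0:ℝ),
            (1 - Real.exp (-(R * ∫ z in Set.Ioi (y / R), β * Real.exp (-((z / rc) ^ η))))))
      Filter.atTop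
      ≤ rc + β * rc ^ 2 / η := by
  have hθη : 1 / η ≤ θ := hθ ▸ le_max_left _ _
  have hc : 1 < (1 + β * rc / η) ^ η := one_lt_rpow (by linarith [div_pos (mul_pos hβ hrc) hη]) hη
  have hconst : rc * ((1 + β * rc / η) ^ η) ^ (1 / η) = rc + β * rc ^ 2 / η := by
    rw [← rpow_mul (by positivity), mul_one_div_cancel hη.ne', rpow_one]
    ring
  obtain ⟨K, s, hs, hle⟩ := eventually_rayleighRatio_le hβ.le hrc hη hθη hc
  rw [← hconst]
  exact limsup_le_of_eventually_le_add_rpow_neg hs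
    ((eventually_ge_atTop 1).mono fun R hR => rayleighRatio_nonneg hβ.le hR) hle
end
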